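/- For a Hausdorff space X, the hyperspace CL(X) with the Fell topology is quasi-metrizable if and only if X is hemicompact and metrizable. -/

import Mathlib

open Set TopologicalSpace

/-- The hyperspace of nonempty closed subsets of `X`. -/
structure CL (X : Type*) [TopologicalSpace X] where
  carrier : Set X
  nonempty' : carrier.Nonempty
  isClosed' : IsClosed carrier

/-- A quasi-metric: like a metric but without symmetry. -/
def IsQuasiMetric {X : Type*} (d : X → X → ℝ) : Prop :=
  (∀ x y, 0 ≤ d x y) ∧ (∀ x y, d x y = 0 ↔ x = y) ∧ (∀ x y z, d x z ≤ d x y + d y z)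

/-- A space is quasi-metrizable if the balls of some quasi-metric generate its topology. -/
def QuasiMetrizable (X : Type*) [TopologicalSpace X] : Prop :=
  ∃ d : X → X → ℝ, IsQuasiMetric d ∧
    ∀ s : Set X, IsOpen s ↔ ∀ x ∈ s, ∃ ε > 0, {y | d x y < ε} ⊆ s

/-- The set of non-isolated points of `X`. -/
def NI (X : Type*) [TopologicalSpace X] : Set X := {x | ¬ IsOpen ({x} : Set X)}

/-- A subset is countably compact if every countable open cover has a finite subcover. -/
def CountablyCompactSet {Y : Type*} [TopologicalSpace Y] (s : Set Y) : Prop :=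
  ∀ f : ℕ → Set Y, (∀ n, IsOpen (f n)) → s ⊆ ⋃ n, f n → ∃ t : Finset ℕ, s ⊆ ⋃ n ∈ t, f n

/-- A space is hemicompact if some sequence of compact sets is cofinal in the compact sets. -/
def Hemicompact (X : Type*) [TopologicalSpace X] : Prop :=
  ∃ K : ℕ → Set X, (∀ n, IsCompact (K n)) ∧ ∀ L : Set X, IsCompact L → ∃ n, L ⊆ K n

/-- The Fell topology on `CL X`: subbase `U⁻` for `U` open nonempty and `(Kᶜ)⁺` for `K`
compact, `K ≠ X`. -/
def fellTop (X : Type*) [TopologicalSpace X] : TopologicalSpace (CL X) :=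
  generateFrom
    ({S | ∃ U : Set X, IsOpen U ∧ U.Nonempty ∧ S = {A : CL X | (A.carrier ∩ U).Nonempty}} ∪
     {S | ∃ K : Set X, IsCompact K ∧ K ≠ Set.univ ∧ S = {A : CL X | A.carrier ⊆ Kᶜ}})

noncomputable instance (X : Type*) [TopologicalSpace X] : TopologicalSpace (CL X) :=
  fellTop X

/-!
A quasi-metric gives every point a countable neighbourhood base, and on a compact Hausdorff
space the open sets `⋃ₓ B(x, 1/n) ×ˢ B(x, 1/n)` cut out the diagonal, which is therefore a `Gδ`;
this forces metrizability.

In the Fell topology `{x, y} → {x}` as `y` leaves every compact set, and the neighbourhoods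
`(Kᶜ)⁺` of `{x}` show that, for two points `x ≠ y`, the neighbourhood filters of `{x}` and `{y}`
pulled back along `z ↦ {x, z}` and `z ↦ {y, z}` meet exactly in the cocompact filter. So a first
countable `CL X` makes the cocompact filter of `X` countably generated, i.e. `X` hemicompact.
Since `x ↦ {x}` embeds `X` into `CL X`, `X` is quasi-metrizable as well; being hemicompact and
first countable it is locally compact, and its compacta are metrizable, so it is second
countable and metrizable. Conversely, for `X` locally compact, second countable and Hausdorff,
the Fell topology is `T₀`, regular and second countable, hence metrizable.
-/

open Filter Topology

section QuasiMetric

variable {Y : Type*} [TopologicalSpace Y]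

theorem quasiMetrizable_iff_hasBasis_nhds :
    QuasiMetrizable Y ↔ ∃ d : Y → Y → ℝ, IsQuasiMetric d ∧
      ∀ x, (𝓝 x).HasBasis (fun ε : ℝ => 0 < ε) (fun ε => {y | d x y < ε}) := by
  refine ⟨fun ⟨d, hd, hopen⟩ => ⟨d, hd, fun x => ⟨fun s => ⟨fun hs => ?_, ?_⟩⟩⟩,
    fun ⟨d, hd, hbasis⟩ => ⟨d, hd, fun s => ?_⟩⟩
  · obtain ⟨O, hOs, hO, hxO⟩ := mem_nhds_iff.1 hs
    obtain ⟨ε, hε, hball⟩ := (hopen O).1 hO x hxO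
    exact ⟨ε, hε, hball.trans hOs⟩
  · rintro ⟨ε, hε, hball⟩
    set O := {y | ∃ δ > 0, {z | d y z < δ} ⊆ {z | d x z < ε}}
    have hO : IsOpen O := by
      refine (hopen O).2 fun y ⟨δ, hδ, hy⟩ => ⟨δ / 2, half_pos hδ, fun w hw => ?_⟩
      refine ⟨δ / 2, half_pos hδ, fun z hz => hy ?_⟩
      have hw : d y w < δ / 2 := hw
      have hz : d w z < δ / 2 := hz
      calc d y z ≤ d y w + d w z := hd.2.2 y w z
        _ < δ := by linarith
    refine mem_of_superset (hO.mem_nhds ⟨ε, hε, subset_rfl⟩) fun y ⟨δ, hδ, hy⟩ => hball (hy ?_)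
    show d y y < δ
    rwa [(hd.2.1 y y).2 rfl]
  · exact isOpen_iff_mem_nhds.trans (forall₂_congr fun x _ => (hbasis x).mem_iff)

theorem QuasiMetrizable.firstCountableTopology (h : QuasiMetrizable Y) :
    FirstCountableTopology Y := by
  obtain ⟨d, -, hbasis⟩ := quasiMetrizable_iff_hasBasis_nhds.1 h
  refine ⟨fun x => HasBasis.isCountablyGenerated (p := fun _ : ℕ => True)
    (s := fun n => {y | d x y < 1 / ((n : ℝ) + 1)}) ((hbasis x).to_hasBasis (fun ε hε => ?_)
      fun n _ => ⟨_, Nat.one_div_pos_of_nat, subset_rfl⟩)⟩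
  obtain ⟨n, hn⟩ := exists_nat_one_div_lt hε
  exact ⟨n, trivial, fun y hy => lt_trans hy hn⟩

theorem QuasiMetrizable.of_isEmbedding {Z : Type*} [TopologicalSpace Z] {f : Z → Y}
    (hf : IsEmbedding f) (h : QuasiMetrizable Y) : QuasiMetrizable Z := by
  obtain ⟨d, ⟨hnonneg, hzero, htri⟩, hbasis⟩ := quasiMetrizable_iff_hasBasis_nhds.1 h
  refine quasiMetrizable_iff_hasBasis_nhds.2 ⟨fun a b => d (f a) (f b),
    ⟨fun a b => hnonneg _ _, fun a b => (hzero _ _).trans hf.injective.eq_iff,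
      fun a b c => htri _ _ _⟩, fun x => ?_⟩
  rw [hf.isInducing.nhds_eq_comap]
  exact (hbasis (f x)).comap f

theorem QuasiMetrizable.of_metrizableSpace [MetrizableSpace Y] : QuasiMetrizable Y := by
  let _ := metrizableSpaceMetric Y
  refine quasiMetrizable_iff_hasBasis_nhds.2 ⟨dist,
    ⟨fun _ _ => dist_nonneg, fun _ _ => dist_eq_zero, dist_triangle⟩, fun x => ?_⟩
  convert Metric.nhds_basis_ball (x := x) using 2 with ε
  ext y
  simp [dist_comm]

end QuasiMetric

section CompactMetrizable

theorem IsGδ.isCountablyGenerated_nhdsSet {Z : Type*} [TopologicalSpace Z] [CompactSpace Z]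
    [NormalSpace Z] {C : Set Z} (hC : IsClosed C) (hG : IsGδ C) :
    (𝓝ˢ C).IsCountablyGenerated := by
  obtain ⟨V, hVo, rfl⟩ := isGδ_iff_eq_iInter_nat.1 hG
  have hW : ∀ n, ∃ W, IsOpen W ∧ ⋂ n, V n ⊆ W ∧ closure W ⊆ V n := fun n =>
    normal_exists_closure_subset hC (hVo n) (iInter_subset V n)
  choose W hWo hCW hWV using hW
  suffices 𝓝ˢ (⋂ n, V n) = ⨅ n, 𝓟 (W n) by rw [this]; exact isCountablyGenerated_seq W
  refine le_antisymm (le_iInf fun n => le_principal_iff.2 ((hWo n).mem_nhdsSet.2 (hCW n))) ?_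
  intro s hs
  obtain ⟨U, hU, hCU, hUs⟩ := mem_nhdsSet_iff_exists.1 hs
  -- compactness of `Uᶜ` against the closed sets `closure (W n)`, whose intersection lies in `U`
  obtain ⟨t, ht⟩ := hU.isClosed_compl.isCompact.elim_finite_subfamily_closed
    (fun n => closure (W n)) (fun _ => isClosed_closure)
    (eq_empty_of_forall_notMem fun x ⟨hxU, hx⟩ =>
      hxU (hCU (mem_iInter.2 fun n => hWV n (mem_iInter.1 hx n))))
  refine mem_of_superset ((biInter_finset_mem t).2 fun n _ => mem_iInf_of_mem n
    (mem_principal_self (W n))) fun x hx => hUs ?_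
  by_contra hxU
  exact (eq_empty_iff_forall_notMem.1 ht) x
    ⟨hxU, mem_iInter₂.2 fun n hn => subset_closure (mem_iInter₂.1 hx n hn)⟩

theorem metrizableSpace_of_isGδ_diagonal {Z : Type*} [TopologicalSpace Z] [CompactSpace Z]
    [T2Space Z] (h : IsGδ (diagonal Z)) : MetrizableSpace Z :=
  -- the uniformity of a compact Hausdorff space is `𝓝ˢ (diagonal Z)`
  let _ : UniformSpace Z := uniformSpaceOfCompactR1
  have : (uniformity Z).IsCountablyGenerated := h.isCountablyGenerated_nhdsSet isClosed_diagonal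
  UniformSpace.metrizableSpace

variable {Y : Type*} [TopologicalSpace Y] {d : Y → Y → ℝ}

theorem IsQuasiMetric.eq_of_mapClusterPt (hd : IsQuasiMetric d)
    (hbasis : ∀ x, (𝓝 x).HasBasis (fun ε : ℝ => 0 < ε) (fun ε => {y | d x y < ε}))
    {u : ℕ → Y} {p a : Y} (hp : MapClusterPt p atTop u)
    (hu : ∀ n, d (u n) a < 1 / ((n : ℝ) + 1)) : p = a := by
  by_contra hpa
  have hr : 0 < d p a := (hd.1 p a).lt_of_ne' fun h => hpa ((hd.2.1 p a).1 h)
  obtain ⟨N, hN⟩ := exists_nat_one_div_lt (half_pos hr)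
  obtain ⟨n, hn, hN'⟩ := ((hp.frequently ((hbasis p).mem_of_mem (half_pos hr))).and_eventually
    (eventually_ge_atTop N)).exists
  have : 1 / ((n : ℝ) + 1) ≤ 1 / ((N : ℝ) + 1) := Nat.one_div_le_one_div hN'
  linarith [hd.2.2 p (u n) a, hu n, show d p (u n) < d p a / 2 from hn]

theorem IsQuasiMetric.isGδ_diagonal [CompactSpace Y] (hd : IsQuasiMetric d)
    (hbasis : ∀ x, (𝓝 x).HasBasis (fun ε : ℝ => 0 < ε) (fun ε => {y | d x y < ε})) :
    IsGδ (diagonal Y) := by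
  set V : ℕ → Set (Y × Y) := fun n =>
    ⋃ x, interior {y | d x y < 1 / ((n : ℝ) + 1)} ×ˢ interior {y | d x y < 1 / ((n : ℝ) + 1)}
  refine isGδ_iff_eq_iInter_nat.2 ⟨V, fun n => isOpen_iUnion fun x =>
    isOpen_interior.prod isOpen_interior, Subset.antisymm ?_ ?_⟩
  · rintro ⟨a, _⟩ (rfl : a = _)
    have ha (n : ℕ) : a ∈ interior {y | d a y < 1 / ((n : ℝ) + 1)} :=
      mem_interior_iff_mem_nhds.2 ((hbasis a).mem_of_mem Nat.one_div_pos_of_nat)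
    exact mem_iInter.2 fun n => mem_iUnion.2 ⟨a, ha n, ha n⟩
  · intro ⟨a, b⟩ hab
    have hx (n : ℕ) : ∃ x, d x a < 1 / ((n : ℝ) + 1) ∧ d x b < 1 / ((n : ℝ) + 1) := by
      obtain ⟨x, ha, hb⟩ := mem_iUnion.1 (mem_iInter.1 hab n)
      exact ⟨x, interior_subset (s := {y | d x y < _}) ha,
        interior_subset (s := {y | d x y < _}) hb⟩
    choose x hxa hxb using hx
    -- a cluster point of the centres `x n` equals both `a` and `b`
    obtain ⟨p, hp⟩ := exists_clusterPt_of_compactSpace (map x atTop)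
    replace hp : MapClusterPt p atTop x := hp
    exact (hd.eq_of_mapClusterPt hbasis hp hxa).symm.trans (hd.eq_of_mapClusterPt hbasis hp hxb)

theorem QuasiMetrizable.metrizableSpace [CompactSpace Y] [T2Space Y] (h : QuasiMetrizable Y) :
    MetrizableSpace Y :=
  let ⟨_, hd, hbasis⟩ := quasiMetrizable_iff_hasBasis_nhds.1 h
  metrizableSpace_of_isGδ_diagonal (hd.isGδ_diagonal hbasis)

end CompactMetrizable

section Hemicompact

variable {X : Type*} [TopologicalSpace X]

theorem hemicompact_of_isCountablyGenerated_cocompact [(cocompact X).IsCountablyGenerated] :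
    Hemicompact X := by
  obtain ⟨s, hs⟩ := (cocompact X).exists_antitone_basis
  choose L hL hLs using fun n => mem_cocompact.1 (hs.mem n)
  refine ⟨L, hL, fun K hK => ?_⟩
  obtain ⟨n, -, hn⟩ := hs.1.mem_iff.1 hK.compl_mem_cocompact
  exact ⟨n, compl_subset_compl.1 ((hLs n).trans hn)⟩

theorem Hemicompact.weaklyLocallyCompactSpace [FirstCountableTopology X] (h : Hemicompact X) :
    WeaklyLocallyCompactSpace X := by
  obtain ⟨K, hK, hcof⟩ := h
  refine ⟨fun x => ?_⟩
  obtain ⟨B, hB⟩ := (𝓝 x).exists_antitone_basis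
  by_contra! hx
  have hz n : ∃ z ∈ B n, z ∉ K n :=
    not_subset.1 fun hBK => hx (K n) (hK n) (mem_of_superset (hB.mem n) hBK)
  choose z hzB hzK using hz
  -- the convergent sequence `z` together with its limit is a compact set escaping every `K n`
  obtain ⟨n, hn⟩ := hcof _ (hB.tendsto hzB).isCompact_insert_range
  exact hzK n (hn (mem_insert_of_mem _ (mem_range_self n)))

theorem Hemicompact.secondCountableTopology [WeaklyLocallyCompactSpace X] (h : Hemicompact X)
    (hK : ∀ K : Set X, IsCompact K → SecondCountableTopology K) : SecondCountableTopology X := by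
  obtain ⟨K, hKc, hcof⟩ := h
  choose C hC hKC using fun n => exists_compact_superset (hKc n)
  have (n : ℕ) : SecondCountableTopology (interior (C n)) :=
    have := hK (C n) (hC n)
    (IsEmbedding.inclusion interior_subset).secondCountableTopology
  refine secondCountableTopology_of_countable_cover (U := fun n => interior (C n))
    (fun n => isOpen_interior) ?_
  refine eq_univ_of_forall fun x => mem_iUnion.2 ?_
  obtain ⟨n, hn⟩ := hcof {x} isCompact_singleton
  exact ⟨n, hKC n (hn rfl)⟩

theorem Hemicompact.secondCountableTopology_of_quasiMetrizable [T2Space X] (h : Hemicompact X)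
    (hQ : QuasiMetrizable X) : SecondCountableTopology X :=
  have := hQ.firstCountableTopology
  have := h.weaklyLocallyCompactSpace
  h.secondCountableTopology fun K hK =>
    have := isCompact_iff_compactSpace.1 hK
    have := (hQ.of_isEmbedding IsEmbedding.subtypeVal).metrizableSpace (Y := K)
    inferInstance

end Hemicompact

theorem exists_countable_isCompact_between {X : Type*} [TopologicalSpace X]
    [LocallyCompactSpace X] [RegularSpace X] [SecondCountableTopology X] :
    ∃ 𝒦 : Set (Set X), 𝒦.Countable ∧ (∀ L ∈ 𝒦, IsCompact L) ∧
      ∀ K U, IsCompact K → IsOpen U → K ⊆ U → ∃ L ∈ 𝒦, K ⊆ L ∧ L ⊆ U := by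
  obtain ⟨b, hbc, -, hb⟩ := exists_countable_basis X
  set 𝒞 := closure '' {u ∈ b | IsCompact (closure u)}
  refine ⟨sUnion '' {s | s.Finite ∧ s ⊆ 𝒞},
    (countable_ofPred_finite_subset ((hbc.mono (sep_subset _ _)).image _)).image _, ?_, ?_⟩
  · rintro _ ⟨s, ⟨hs, hs𝒞⟩, rfl⟩
    refine hs.isCompact_sUnion fun c hc => ?_
    obtain ⟨u, hu, rfl⟩ := hs𝒞 hc
    exact hu.2
  intro K U hK hU hKU
  have hloc : ∀ x ∈ K, ∃ c ∈ 𝒞, c ∈ 𝓝 x ∧ c ⊆ U := by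
    intro x hx
    obtain ⟨C, hC, hCc, hxC, hCU⟩ :=
      exists_compact_closed_between isCompact_singleton hU (singleton_subset_iff.2 (hKU hx))
    obtain ⟨u, hub, hxu, huC⟩ := hb.exists_subset_of_mem_open (hxC rfl) isOpen_interior
    have hcl : closure u ⊆ C := closure_minimal (huC.trans interior_subset) hCc
    exact ⟨closure u, ⟨u, ⟨hub, hC.of_isClosed_subset isClosed_closure hcl⟩, rfl⟩,
      mem_of_superset ((hb.isOpen hub).mem_nhds hxu) subset_closure, hcl.trans hCU⟩
  choose! c hc𝒞 hcx hcU using hloc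
  obtain ⟨t, htK, hKt⟩ := hK.elim_nhds_subcover c hcx
  refine ⟨⋃₀ (c '' t), ⟨c '' t, ⟨t.finite_toSet.image c,
    image_subset_iff.2 fun x hx => hc𝒞 x (htK x hx)⟩, rfl⟩, ?_, ?_⟩
  · rwa [sUnion_image]
  · exact sUnion_subset (forall_mem_image.2 fun x hx => hcU x (htK x hx))

namespace CL

variable {X : Type*} [TopologicalSpace X]

theorem carrier_injective : Function.Injective (carrier : CL X → Set X) := by
  rintro ⟨A, -, -⟩ ⟨B, -, -⟩ rfl
  rfl

def hitting (U : Set X) : Set (CL X) := {A | (A.carrier ∩ U).Nonempty}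

def missing (K : Set X) : Set (CL X) := {A | A.carrier ⊆ Kᶜ}

theorem hitting_mono {U V : Set X} (h : U ⊆ V) : hitting U ⊆ hitting V :=
  fun _ hA => hA.mono (inter_subset_inter_right _ h)

theorem missing_anti {K L : Set X} (h : K ⊆ L) : missing L ⊆ missing K :=
  fun _ hA => hA.trans (compl_subset_compl.2 h)

theorem compl_hitting (S : Set X) : (hitting S)ᶜ = missing S := by
  ext A
  simp [hitting, missing, not_nonempty_iff_eq_empty, subset_compl_iff_disjoint_right,
    disjoint_iff_inter_eq_empty]

theorem isOpen_hitting {U : Set X} (hU : IsOpen U) : IsOpen (hitting U) := by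
  rcases U.eq_empty_or_nonempty with rfl | hne
  · convert isOpen_empty
    simp [hitting]
  · exact isOpen_generateFrom_of_mem (Or.inl ⟨U, hU, hne, rfl⟩)

theorem isOpen_missing {K : Set X} (hK : IsCompact K) : IsOpen (missing K) := by
  by_cases hne : K = univ
  · convert isOpen_empty
    simpa [missing, hne, eq_empty_iff_forall_notMem] using fun A => A.nonempty'
  · exact isOpen_generateFrom_of_mem (Or.inr ⟨K, hK, hne, rfl⟩)

theorem isClosed_hitting {K : Set X} (hK : IsCompact K) : IsClosed (hitting K) := by
  rw [← isOpen_compl_iff, compl_hitting]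
  exact isOpen_missing hK

theorem isClosed_missing {U : Set X} (hU : IsOpen U) : IsClosed (missing U) := by
  rw [← isOpen_compl_iff, ← compl_hitting, compl_compl]
  exact isOpen_hitting hU

theorem le_nhds {f : Filter (CL X)} {A : CL X}
    (hU : ∀ U, IsOpen U → A ∈ hitting U → hitting U ∈ f)
    (hK : ∀ K, IsCompact K → A ∈ missing K → missing K ∈ f) : f ≤ 𝓝 A := by
  rw [show 𝓝 A = _ from nhds_generateFrom]
  refine le_iInf₂ fun s ⟨hAs, hs⟩ => le_principal_iff.2 ?_
  rcases hs with ⟨U, hU', -, rfl⟩ | ⟨K, hK', -, rfl⟩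
  exacts [hU U hU' hAs, hK K hK' hAs]

theorem le_fellTop {t : TopologicalSpace (CL X)}
    (hU : ∀ U, IsOpen U → IsOpen[t] (hitting U)) (hK : ∀ K, IsCompact K → IsOpen[t] (missing K)) :
    t ≤ fellTop X := by
  refine le_generateFrom fun s hs => ?_
  rcases hs with ⟨U, hU', -, rfl⟩ | ⟨K, hK', -, rfl⟩
  exacts [hU U hU', hK K hK']

section Separated

variable [T1Space X]

def singleton (x : X) : CL X := ⟨{x}, singleton_nonempty x, isClosed_singleton⟩

def pair (x y : X) : CL X := ⟨{x, y}, insert_nonempty x {y}, (toFinite _).isClosed⟩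

@[simp]
theorem singleton_mem_hitting {x : X} {U : Set X} : singleton x ∈ hitting U ↔ x ∈ U :=
  singleton_inter_nonempty

@[simp]
theorem singleton_mem_missing {x : X} {K : Set X} : singleton x ∈ missing K ↔ x ∉ K :=
  singleton_subset_iff

theorem pair_mem_hitting {x y : X} {U : Set X} (hx : x ∈ U) : pair x y ∈ hitting U :=
  ⟨x, mem_insert x {y}, hx⟩

theorem pair_mem_missing {x y : X} {K : Set X} : pair x y ∈ missing K ↔ x ∉ K ∧ y ∉ K :=
  insert_subset_iff.trans (and_congr_right fun _ => singleton_subset_iff)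

theorem tendsto_pair_cocompact (x : X) :
    Tendsto (pair x) (cocompact X) (𝓝 (singleton x)) := by
  refine le_nhds (fun U _ hx => mem_map.2 (univ_mem' fun y => ?_))
    fun K hK hx => mem_map.2 (mem_of_superset hK.compl_mem_cocompact fun y hy => ?_)
  exacts [pair_mem_hitting (singleton_mem_hitting.1 hx),
    pair_mem_missing.2 ⟨singleton_mem_missing.1 hx, hy⟩]

theorem compl_mem_comap_pair {x : X} {K : Set X} (hK : IsCompact K) (hx : x ∉ K) :
    Kᶜ ∈ comap (pair x) (𝓝 (singleton x)) :=
  ⟨missing K, (isOpen_missing hK).mem_nhds (singleton_mem_missing.2 hx),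
    fun _ hy => (pair_mem_missing.1 hy).2⟩

end Separated

section Hausdorff

variable [T2Space X]

theorem cocompact_eq_inf_comap_pair {x y : X} (hxy : x ≠ y) :
    cocompact X = comap (pair x) (𝓝 (singleton x)) ⊓ comap (pair y) (𝓝 (singleton y)) := by
  refine le_antisymm (le_inf (tendsto_pair_cocompact x).le_comap
    (tendsto_pair_cocompact y).le_comap) (hasBasis_cocompact.ge_iff.2 fun K hK => ?_)
  obtain ⟨U, V, hU, hV, hxU, hyV, hUV⟩ := t2_separation hxy
  have hKUV : Kᶜ = (K \ U)ᶜ ∩ (K \ V)ᶜ := by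
    rw [← compl_union, ← sdiff_inter, hUV.inter_eq, sdiff_empty]
  rw [hKUV]
  exact inter_mem_inf (compl_mem_comap_pair (hK.diff hU) fun h => h.2 hxU)
    (compl_mem_comap_pair (hK.diff hV) fun h => h.2 hyV)

theorem isCountablyGenerated_cocompact [FirstCountableTopology (CL X)] :
    (cocompact X).IsCountablyGenerated := by
  rcases subsingleton_or_nontrivial X with hX | hX
  · have := Finite.of_subsingleton (α := X)
    rw [cocompact_eq_bot]
    infer_instance
  · obtain ⟨x, y, hxy⟩ := exists_pair_ne X
    rw [cocompact_eq_inf_comap_pair hxy]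
    infer_instance

theorem isEmbedding_singleton : IsEmbedding (singleton : X → CL X) := by
  refine ⟨⟨le_antisymm (continuous_iff_le_induced.1 ?_) fun U hU => ?_⟩, fun x y h => ?_⟩
  · refine continuous_generateFrom_iff.2 ?_
    rintro _ (⟨U, hU, -, rfl⟩ | ⟨K, hK, -, rfl⟩)
    · convert hU
      exact Set.ext fun _ => singleton_mem_hitting
    · convert hK.isClosed.isOpen_compl
      exact Set.ext fun _ => singleton_mem_missing
  · exact ⟨hitting U, isOpen_hitting hU, Set.ext fun _ => singleton_mem_hitting⟩
  · simpa [singleton] using congrArg carrier h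

end Hausdorff

instance : T0Space (CL X) := by
  refine (t0Space_iff_exists_isOpen_xor_mem _).2 fun A B hAB => ?_
  have hmiss (C : CL X) : C ∉ hitting C.carrierᶜ := fun ⟨x, hxC, hx⟩ => hx hxC
  have hne : ¬(A.carrier ⊆ B.carrier ∧ B.carrier ⊆ A.carrier) :=
    fun h => hAB (carrier_injective (h.1.antisymm h.2))
  rcases not_and_or.1 hne with h | h
  · obtain ⟨x, hxA, hxB⟩ := not_subset.1 h
    exact ⟨_, isOpen_hitting B.isClosed'.isOpen_compl, Or.inl ⟨⟨x, hxA, hxB⟩, hmiss B⟩⟩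
  · obtain ⟨x, hxB, hxA⟩ := not_subset.1 h
    exact ⟨_, isOpen_hitting A.isClosed'.isOpen_compl, Or.inr ⟨⟨x, hxB, hxA⟩, hmiss A⟩⟩

section LocallyCompact

variable [LocallyCompactSpace X]

instance : RegularSpace (CL X) := by
  refine .of_lift'_closure_le fun A => le_nhds (fun U hU ⟨z, hzA, hzU⟩ => ?_) fun K hK hAK => ?_
  · obtain ⟨C, hC, hzC, hCU⟩ :=
      exists_compact_between isCompact_singleton hU (singleton_subset_iff.2 hzU)
    refine mem_of_superset (mem_lift' ((isOpen_hitting isOpen_interior).mem_nhds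
      ⟨z, hzA, hzC rfl⟩)) ?_
    exact (closure_minimal (hitting_mono interior_subset) (isClosed_hitting hC)).trans
      (hitting_mono hCU)
  · obtain ⟨C, hC, hKC, hCA⟩ := exists_compact_between hK A.isClosed'.isOpen_compl
      fun x hxK hxA => hAK hxA hxK
    refine mem_of_superset (mem_lift' ((isOpen_missing hC).mem_nhds
      fun x hxA hxC => hCA hxC hxA)) ?_
    exact (closure_minimal (missing_anti interior_subset) (isClosed_missing isOpen_interior)).trans
      (missing_anti hKC)

instance [RegularSpace X] [SecondCountableTopology X] : SecondCountableTopology (CL X) := by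
  obtain ⟨b, hbc, -, hb⟩ := exists_countable_basis X
  obtain ⟨𝒦, h𝒦c, h𝒦, h𝒦U⟩ := exists_countable_isCompact_between (X := X)
  set 𝒮 := hitting '' b ∪ missing '' 𝒦
  refine ⟨⟨𝒮, (hbc.image _).union (h𝒦c.image _), le_antisymm ?_ ?_⟩⟩
  · refine le_generateFrom ?_
    rintro _ (⟨u, hu, rfl⟩ | ⟨L, hL, rfl⟩)
    exacts [isOpen_hitting (hb.isOpen hu), isOpen_missing (h𝒦 L hL)]
  let t : TopologicalSpace (CL X) := generateFrom 𝒮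
  refine le_fellTop (fun U hU => (@isOpen_iff_forall_mem_open _ t _).2 ?_)
    fun K hK => (@isOpen_iff_forall_mem_open _ t _).2 ?_
  · rintro A ⟨z, hzA, hzU⟩
    obtain ⟨u, hu, hzu, huU⟩ := hb.exists_subset_of_mem_open hzU hU
    exact ⟨hitting u, hitting_mono huU, isOpen_generateFrom_of_mem (Or.inl ⟨u, hu, rfl⟩),
      z, hzA, hzu⟩
  · intro A hAK
    obtain ⟨L, hL, hKL, hLA⟩ := h𝒦U K A.carrierᶜ hK A.isClosed'.isOpen_compl
      fun x hxK hxA => hAK hxA hxK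
    exact ⟨missing L, missing_anti hKL, isOpen_generateFrom_of_mem (Or.inr ⟨L, hL, rfl⟩),
      fun x hxA hxL => hLA hxL hxA⟩

end LocallyCompact

end CL

theorem quasiMetrizable_CL_fell_iff {X : Type*} [TopologicalSpace X] [T2Space X] :
    QuasiMetrizable (CL X) ↔
      (Hemicompact X ∧ TopologicalSpace.MetrizableSpace X) := by
  constructor
  · intro h
    have := h.firstCountableTopology
    have := CL.isCountablyGenerated_cocompact (X := X)
    have hH : Hemicompact X := hemicompact_of_isCountablyGenerated_cocompact
    have hQ : QuasiMetrizable X := h.of_isEmbedding CL.isEmbedding_singleton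
    have := hQ.firstCountableTopology
    have := hH.weaklyLocallyCompactSpace
    have := hH.secondCountableTopology_of_quasiMetrizable hQ
    exact ⟨hH, inferInstance⟩
  · rintro ⟨hH, hM⟩
    have := hH.weaklyLocallyCompactSpace
    have := hH.secondCountableTopology_of_quasiMetrizable .of_metrizableSpace
    exact .of_metrizableSpace
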